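/- Suppose X ⊆ {0,1}^I (agent demands at most one unit of each good) and V : X → ℝ. If V is a substitutes valuation, then whenever a price vector p satisfies |D(p)| = 2, writing D(p) = {x, x'}, the difference x' - x has at most one positive component and at most one negative component. -/

import Mathlib

noncomputable def dotp {I : Type*} [Fintype I] (p : I → ℝ) (x : I → ℤ) : ℝ :=
  ∑ i, p i * (x i : ℝ)

/-!
Suppose `D(p) = {x, x'}` with `x i = 1` and `x' i = 0`. Every bundle outside `D(p)` is strictly
worse than `x` and `x'` at `p`, and moving the price of a single good by `λ` changes the utility of
a 0/1 bundle by at most `|λ|`. Hence lowering the price of `i` by `1` makes `x` the unique demanded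
bundle, and raising it by `1` makes `x'` unique. Going from the first price to the second is a
price increase of good `i` alone, so by substitutes `x j ≤ x' j` for every `j ≠ i`: the goods that
`x'` drops relative to `x` are at most one. Exchanging `x` and `x'` gives the same for the goods
it adds.
-/

section ShiftPrice

variable {I : Type*} [DecidableEq I]

def shiftPrice (p : I → ℝ) (i : I) (lam : ℝ) : I → ℝ :=
  fun k => p k + if k = i then lam else 0

theorem shiftPrice_shiftPrice (p : I → ℝ) (i : I) (a b : ℝ) :
    shiftPrice (shiftPrice p i a) i b = shiftPrice p i (a + b) := by
  funext k
  simp only [shiftPrice]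
  split_ifs <;> ring

end ShiftPrice

section Demand

variable {I : Type*} [Fintype I]

def demand (X : Finset (I → ℤ)) (V : (I → ℤ) → ℝ) (p : I → ℝ) : Set (I → ℤ) :=
  {z | z ∈ X ∧ ∀ y ∈ X, V y - dotp p y ≤ V z - dotp p z}

variable [DecidableEq I]

theorem dotp_shiftPrice (p : I → ℝ) (i : I) (lam : ℝ) (y : I → ℤ) :
    dotp (shiftPrice p i lam) y = dotp p y + lam * y i := by
  simp [dotp, shiftPrice, add_mul, Finset.sum_add_distrib, ite_mul]

def IsSubstitutes (X : Finset (I → ℤ)) (V : (I → ℤ) → ℝ) : Prop :=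
  ∀ (p : I → ℝ) (i : I) (lam : ℝ), 0 < lam → ∀ x x' : I → ℤ,
    demand X V p = {x} → demand X V (shiftPrice p i lam) = {x'} → ∀ k, k ≠ i → x k ≤ x' k

variable (X : Finset (I → ℤ)) (V : (I → ℤ) → ℝ)

theorem demand_shiftPrice_eq_singleton {p : I → ℝ} {i : I} {lam : ℝ} {x : I → ℤ}
    (hx : x ∈ demand X V p) (hbest : ∀ y ∈ demand X V p, y ≠ x → lam * x i < lam * y i)
    (hbound : ∀ z ∈ X, lam * x i ≤ lam * z i) :
    demand X V (shiftPrice p i lam) = {x} := by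
  obtain ⟨hxX, hxmax⟩ := hx
  have hx_shift : x ∈ demand X V (shiftPrice p i lam) :=
    ⟨hxX, fun z hz => by
      rw [dotp_shiftPrice, dotp_shiftPrice]
      linarith [hxmax z hz, hbound z hz]⟩
  refine Set.eq_singleton_iff_unique_mem.2 ⟨hx_shift, fun z ⟨hzX, hzmax⟩ => ?_⟩
  by_contra hne
  have hzx := hzmax x hxX
  rw [dotp_shiftPrice, dotp_shiftPrice] at hzx
  have hzD : z ∈ demand X V p :=
    ⟨hzX, fun y hy => by linarith [hxmax y hy, hxmax z hzX, hbound z hzX]⟩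
  linarith [hbest z hzD hne, hxmax z hzX]

theorem IsSubstitutes.le_of_demand_eq_pair (hsub : IsSubstitutes X V)
    (hX01 : ∀ x ∈ X, ∀ i, x i = 0 ∨ x i = 1) {p : I → ℝ} {x x' : I → ℤ}
    (hD : demand X V p = {x, x'}) {i j : I} (hi : x' i < x i) (hji : j ≠ i) :
    x j ≤ x' j := by
  have hx : x ∈ demand X V p := hD ▸ Set.mem_insert x {x'}
  have hx' : x' ∈ demand X V p := hD ▸ Set.mem_insert_of_mem x rfl
  obtain ⟨hxi, hx'i⟩ : x i = 1 ∧ x' i = 0 := by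
    rcases hX01 x hx.1 i with h | h <;> rcases hX01 x' hx'.1 i with h' | h' <;> omega
  have hbound : ∀ z ∈ X, (0 : ℝ) ≤ z i ∧ (z i : ℝ) ≤ 1 := fun z hz => by
    rcases hX01 z hz i with h | h <;> simp [h]
  have hlow : demand X V (shiftPrice p i (-1)) = {x} := by
    refine demand_shiftPrice_eq_singleton X V hx (fun y hy hne => ?_) fun z hz => ?_
    · obtain rfl : y = x' := by simpa [hne] using (hD ▸ hy : y ∈ ({x, x'} : Set (I → ℤ)))
      simp [hxi, hx'i]
    · simp only [hxi]; push_cast; linarith [hbound z hz]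
  have hhigh : demand X V (shiftPrice (shiftPrice p i (-1)) i 2) = {x'} := by
    rw [shiftPrice_shiftPrice, show (-1 : ℝ) + 2 = 1 by norm_num]
    refine demand_shiftPrice_eq_singleton X V hx' (fun y hy hne => ?_) fun z hz => ?_
    · obtain rfl : y = x := by simpa [hne] using (hD ▸ hy : y ∈ ({x, x'} : Set (I → ℤ)))
      simp [hxi, hx'i]
    · simp only [hx'i]; push_cast; linarith [hbound z hz]
  exact hsub _ i 2 two_pos x x' hlow hhigh j hji

end Demand

/-- one direction of the Fujishige–Yang characterization, Fact 5:
if `X ⊆ {0,1}^I` and `V` is a substitutes valuation, then whenever a demand set has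
exactly two elements `{x,x'}`, the difference `x' - x` has at most one positive and
at most one negative component. -/
theorem substitutes_two_element_demand {I : Type*} [Fintype I] [DecidableEq I]
    (X : Finset (I → ℤ)) (hX01 : ∀ x ∈ X, ∀ i, x i = 0 ∨ x i = 1)
    (V : (I → ℤ) → ℝ)
    (hsub : ∀ (p : I → ℝ) (i : I) (lam : ℝ), 0 < lam →
      ∀ x x' : I → ℤ,
        {z : I → ℤ | z ∈ X ∧ ∀ y ∈ X, V y - dotp p y ≤ V z - dotp p z} = {x} →
        {z : I → ℤ | z ∈ X ∧ ∀ y ∈ X,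
            V y - dotp (fun k => p k + if k = i then lam else 0) y
              ≤ V z - dotp (fun k => p k + if k = i then lam else 0) z} = {x'} →
        ∀ k, k ≠ i → x k ≤ x' k) :
    ∀ (p : I → ℝ) (x x' : I → ℤ), x ≠ x' →
      {z : I → ℤ | z ∈ X ∧ ∀ y ∈ X, V y - dotp p y ≤ V z - dotp p z}
        = ({x, x'} : Set (I → ℤ)) →
      (∀ i j : I, 0 < x' i - x i → 0 < x' j - x j → i = j) ∧
      (∀ i j : I, x' i - x i < 0 → x' j - x j < 0 → i = j) := by
  intro p x x' _ hD
  have hsub' : IsSubstitutes X V := hsub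
  have hD' : demand X V p = {x', x} := hD.trans (Set.pair_comm x x')
  refine ⟨fun i j hi hj => ?_, fun i j hi hj => ?_⟩ <;> by_contra hij
  · have := hsub'.le_of_demand_eq_pair X V hX01 hD' (i := i) (by omega) (Ne.symm hij)
    omega
  · have := hsub'.le_of_demand_eq_pair X V hX01 hD (i := i) (by omega) (Ne.symm hij)
    omega
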